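/- arXiv:2508.00337 — 3 statements merged into one kernel-verified Lean document; each statement's English description precedes it below -/
import Mathlib

section
/- Let n ≥ 1 and s ∈ (0,1). With f_s as above, lim_{R → ∞} f_s(R) = −H^s_{B_1}(e₁) < 0, where H^s_{B_1}(e₁) := p.v. ∫_{ℝ^n} (χ_{B_1^c}(y) − χ_{B_1}(y)) |e₁ − y|^{-(n+s)} dy > 0 is the (unnormalised) fractional mean curvature of the unit ball at a boundary point. -/
/-!
Write `K(y) = ‖e₁ - y‖^{-(n+s)}` and `A_R = B_R \ B_1`. Pointwise
`χ_{A_Rᶜ} - χ_{A_R} = -(χ_{B_1ᶜ} - χ_{B_1}) + 2 χ_{B_Rᶜ}`, so `f_s(R) = -H + 2 ∫_{B_Rᶜ} K`, and the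
tail integral vanishes as `R → ∞` because `K` is integrable away from `e₁` (`n + s > n`).

For `H > 0`: the point reflection `y ↦ 2e₁ - y` preserves `K` and the excised balls `B_δ(e₁)`,
and maps `B_1` onto `B_1(2e₁) ⊆ B_1ᶜ`. Hence each truncated integral equals the integral of `K`
over `B_1ᶜ \ B_1(2e₁)` outside `B_δ(e₁)`, a region containing `B_1(-2e₁)` for every `δ ≤ 2`.
-/

open Metric MeasureTheory Set Filter Module

lemma rpow_neg_le_mul_one_add_rpow_neg {t δ p : ℝ} (hδ : 0 < δ) (hδt : δ ≤ t) (hp : 0 ≤ p) :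
    t ^ (-p) ≤ (1 + δ⁻¹) ^ p * (1 + t) ^ (-p) := by
  have ht : 0 < t := hδ.trans_le hδt
  calc t ^ (-p) = ((1 + t) / t) ^ p * (1 + t) ^ (-p) := by
        rw [Real.rpow_neg ht.le, Real.div_rpow (by positivity) ht.le, Real.rpow_neg (by positivity)]
        field_simp
    _ ≤ (1 + δ⁻¹) ^ p * (1 + t) ^ (-p) := by
        rw [add_div, div_self ht.ne', one_div, add_comm]
        gcongr

lemma indicator_compl_sub_indicator_mul {α : Type*} (S : Set α) (g : α → ℝ) (y : α) :
    (Sᶜ.indicator (fun _ => (1 : ℝ)) y - S.indicator (fun _ => (1 : ℝ)) y) * g y =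
      Sᶜ.indicator g y - S.indicator g y := by
  by_cases h : y ∈ S <;> simp [h]

lemma indicator_compl_sub_indicator_diff {α : Type*} {S T : Set α} (hST : S ⊆ T) (g : α → ℝ)
    (y : α) :
    (T \ S)ᶜ.indicator g y - (T \ S).indicator g y =
      -(Sᶜ.indicator g y - S.indicator g y) + 2 * Tᶜ.indicator g y := by
  by_cases hS : y ∈ S
  · simp [hS, hST hS]
  · by_cases hT : y ∈ T <;> simp [hS, hT]; ring

lemma tendsto_setIntegral_compl_ball_atTop {X F : Type*} [PseudoMetricSpace X] [MeasurableSpace X]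
    [OpensMeasurableSpace X] [NormedAddCommGroup F] [NormedSpace ℝ F] {μ : Measure X}
    {g : X → F} (c : X) {R₀ : ℝ} (hg : IntegrableOn g (ball c R₀)ᶜ μ) :
    Tendsto (fun R => ∫ y in (ball c R)ᶜ, g y ∂μ) atTop (nhds 0) := by
  have h := tendsto_setIntegral_of_antitone (fun R => measurableSet_ball.compl)
    (fun R R' h => compl_subset_compl.2 (ball_subset_ball h)) ⟨R₀, hg⟩
  have hempty : ⋂ R : ℝ, (ball c R)ᶜ = ∅ :=
    eq_empty_of_forall_notMem fun y hy => mem_iInter.1 hy (dist y c + 1) (by simp)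
  rwa [hempty, setIntegral_empty] at h

/-- Its limit as `δ → 0⁺` is the paper's `H^s_S(x)` when `p = n + s`. -/
noncomputable def truncatedCurvature {E : Type*} [NormedAddCommGroup E] [MeasurableSpace E]
    (μ : Measure E) (S : Set E) (x : E) (p δ : ℝ) : ℝ :=
  ∫ y in (ball x δ)ᶜ,
    (Sᶜ.indicator (fun _ => (1 : ℝ)) y - S.indicator (fun _ => (1 : ℝ)) y) * ‖x - y‖ ^ (-p) ∂μ

section Curvature

variable {E : Type*} [NormedAddCommGroup E] [MeasurableSpace E] {μ : Measure E} {x : E} {p δ : ℝ}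

lemma truncatedCurvature_eq_integral_indicator (S : Set E) :
    truncatedCurvature μ S x p δ =
      ∫ y in (ball x δ)ᶜ, (Sᶜ.indicator (fun y => ‖x - y‖ ^ (-p)) y
        - S.indicator (fun y => ‖x - y‖ ^ (-p)) y) ∂μ := by
  refine integral_congr_ae (ae_of_all _ fun y => ?_)
  exact indicator_compl_sub_indicator_mul S (fun y => ‖x - y‖ ^ (-p)) y

lemma setIntegral_norm_sub_rpow_neg_pos {U : Set E} (hU : IsOpen U) (hne : U.Nonempty)
    [μ.IsOpenPosMeasure] (hxU : x ∉ U) (hint : IntegrableOn (fun y => ‖x - y‖ ^ (-p)) U μ) :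
    0 < ∫ y in U, ‖x - y‖ ^ (-p) ∂μ := by
  refine (setIntegral_pos_iff_support_of_nonneg_ae (ae_of_all _ fun y => by positivity) hint).2 ?_
  have hsupp : Function.support (fun y => ‖x - y‖ ^ (-p)) ∩ U = U := by
    refine inter_eq_right.2 fun y hy => (Real.rpow_pos_of_pos ?_ _).ne'
    exact norm_pos_iff.2 (sub_ne_zero.2 fun h => hxU (h ▸ hy))
  rw [hsupp]
  exact hU.measure_pos μ hne

variable [NormedSpace ℝ E] [FiniteDimensional ℝ E] [BorelSpace E] [μ.IsAddHaarMeasure]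

lemma integrableOn_norm_sub_rpow_neg_compl_ball (hp : (finrank ℝ E : ℝ) < p) (hδ : 0 < δ) :
    IntegrableOn (fun y => ‖x - y‖ ^ (-p)) (ball x δ)ᶜ μ := by
  have hdom : Integrable (fun y => (1 + δ⁻¹) ^ p * (1 + ‖x - y‖) ^ (-p)) μ :=
    ((integrable_one_add_norm hp).comp_sub_left x).const_mul _
  refine hdom.integrableOn.mono'
    (by fun_prop : Measurable fun y : E => ‖x - y‖ ^ (-p)).aestronglyMeasurable ?_
  rw [ae_restrict_iff' measurableSet_ball.compl]
  filter_upwards with y hy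
  have hδy : δ ≤ ‖x - y‖ := by simpa [mem_ball, dist_eq_norm'] using hy
  rw [Real.norm_of_nonneg (by positivity)]
  exact rpow_neg_le_mul_one_add_rpow_neg hδ hδy (Nat.cast_nonneg _ |>.trans hp.le)

lemma truncatedCurvature_eq_sub {S : Set E} (hS : MeasurableSet S)
    (hp : (finrank ℝ E : ℝ) < p) (hδ : 0 < δ) :
    truncatedCurvature μ S x p δ =
      (∫ y in (ball x δ)ᶜ ∩ Sᶜ, ‖x - y‖ ^ (-p) ∂μ) - ∫ y in (ball x δ)ᶜ ∩ S, ‖x - y‖ ^ (-p) ∂μ := by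
  have hK := integrableOn_norm_sub_rpow_neg_compl_ball (μ := μ) (x := x) hp hδ
  rw [truncatedCurvature_eq_integral_indicator, integral_sub (hK.indicator hS.compl)
    (hK.indicator hS), setIntegral_indicator hS.compl, setIntegral_indicator hS]

lemma truncatedCurvature_diff {S T : Set E} (hS : MeasurableSet S) (hT : MeasurableSet T)
    (hST : S ⊆ T) (hxT : ball x δ ⊆ T) (hp : (finrank ℝ E : ℝ) < p) (hδ : 0 < δ) :
    truncatedCurvature μ (T \ S) x p δ =
      -truncatedCurvature μ S x p δ + 2 * ∫ y in Tᶜ, ‖x - y‖ ^ (-p) ∂μ := by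
  have hK := integrableOn_norm_sub_rpow_neg_compl_ball (μ := μ) (x := x) hp hδ
  simp only [truncatedCurvature_eq_integral_indicator, indicator_compl_sub_indicator_diff hST]
  rw [integral_add, integral_neg, integral_const_mul, setIntegral_indicator hT.compl,
    inter_eq_right.2 (compl_subset_compl.2 hxT)]
  · exact ((hK.indicator hS.compl).sub (hK.indicator hS)).neg
  · exact (hK.indicator hT.compl).const_mul 2

lemma truncatedCurvature_eq_setIntegral_of_disjoint_reflection {S : Set E} (hS : MeasurableSet S)
    (hdisj : Disjoint S ((x + x - ·) ⁻¹' S)) (hp : (finrank ℝ E : ℝ) < p) (hδ : 0 < δ) :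
    truncatedCurvature μ S x p δ =
      ∫ y in (ball x δ)ᶜ ∩ (Sᶜ \ (x + x - ·) ⁻¹' S), ‖x - y‖ ^ (-p) ∂μ := by
  have hK := integrableOn_norm_sub_rpow_neg_compl_ball (μ := μ) (x := x) hp hδ
  have hσS : MeasurableSet ((x + x - ·) ⁻¹' S) := hS.preimage (by fun_prop)
  have hσK (y : E) : ‖x - (x + x - y)‖ ^ (-p) = ‖x - y‖ ^ (-p) := by
    rw [show x - (x + x - y) = -(x - y) by abel, norm_neg]
  have hσball : (x + x - ·) ⁻¹' (ball x δ)ᶜ = (ball x δ)ᶜ := by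
    ext y
    simp only [mem_preimage, mem_compl_iff, mem_ball, dist_eq_norm,
      show x + x - y - x = -(y - x) by abel, norm_neg]
  have hreflect : ∫ y in (ball x δ)ᶜ ∩ (x + x - ·) ⁻¹' S, ‖x - y‖ ^ (-p) ∂μ =
      ∫ y in (ball x δ)ᶜ ∩ S, ‖x - y‖ ^ (-p) ∂μ := by
    have := (Measure.measurePreserving_sub_left μ (x + x)).setIntegral_preimage_emb
      (Homeomorph.subLeft (x + x)).measurableEmbedding (fun y => ‖x - y‖ ^ (-p)) ((ball x δ)ᶜ ∩ S)
    simpa only [preimage_inter, hσball, hσK] using this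
  rw [truncatedCurvature_eq_sub hS hp hδ, ← hreflect, inter_sdiff_distrib_left,
    setIntegral_sdiff (measurableSet_ball.compl.inter hσS) (hK.mono_set inter_subset_left)
      (inter_subset_inter_right _ hdisj.symm.subset_compl_right)]

theorem pos_of_tendsto_truncatedCurvature_ball {r H : ℝ} (hx : ‖x‖ = r) (hr : 0 < r)
    (hp : (finrank ℝ E : ℝ) < p)
    (hH : Tendsto (truncatedCurvature μ (ball 0 r) x p) (nhdsWithin 0 (Ioi 0)) (nhds H)) :
    0 < H := by
  have hnorm (c : ℝ) : ‖c • x‖ = |c| * r := by rw [norm_smul, hx, Real.norm_eq_abs]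
  have hsep_x : ∀ {δ}, δ ≤ 2 * r → Disjoint (ball (-(x + x)) r) (ball x δ) := fun hδ =>
    ball_disjoint_ball <| by
      rw [dist_eq_norm, show -(x + x) - x = (-3 : ℝ) • x by module, hnorm]; norm_num; linarith
  have hreflect : (x + x - ·) ⁻¹' ball 0 r = ball (x + x) r := by
    ext y
    rw [mem_preimage, mem_ball_zero_iff, mem_ball, dist_eq_norm, ← norm_neg]
    simp only [neg_sub]
  have hdisj : Disjoint (ball 0 r) (ball (x + x) r) := ball_disjoint_ball <| by
    rw [dist_comm, dist_zero_right, show x + x = (2 : ℝ) • x by module, hnorm]; norm_num; linarith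
  have hsep_zero : Disjoint (ball (-(x + x)) r) (ball 0 r) := ball_disjoint_ball <| by
    rw [dist_zero_right, show -(x + x) = (-2 : ℝ) • x by module, hnorm]; norm_num; linarith
  have hsep_twoX : Disjoint (ball (-(x + x)) r) (ball (x + x) r) := ball_disjoint_ball <| by
    rw [dist_eq_norm, show -(x + x) - (x + x) = (-4 : ℝ) • x by module, hnorm]; norm_num; linarith
  have hbound : ∀ δ ∈ Ioc 0 (2 * r), ∫ y in ball (-(x + x)) r, ‖x - y‖ ^ (-p) ∂μ ≤
      truncatedCurvature μ (ball 0 r) x p δ := by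
    rintro δ ⟨hδ, hδr⟩
    rw [truncatedCurvature_eq_setIntegral_of_disjoint_reflection measurableSet_ball
      (hreflect ▸ hdisj) hp hδ, hreflect]
    refine setIntegral_mono_set
      ((integrableOn_norm_sub_rpow_neg_compl_ball hp hδ).mono_set inter_subset_left)
      (ae_of_all _ fun y => by positivity) (Eventually.of_forall fun y hy => ?_)
    exact ⟨(hsep_x hδr).subset_compl_right hy,
      hsep_zero.subset_compl_right hy, hsep_twoX.subset_compl_right hy⟩
  have hpos : 0 < ∫ y in ball (-(x + x)) r, ‖x - y‖ ^ (-p) ∂μ := by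
    refine setIntegral_norm_sub_rpow_neg_pos isOpen_ball (nonempty_ball.2 hr)
      (fun h => (hsep_x le_rfl).subset_compl_right h (mem_ball_self (by linarith))) ?_
    exact (integrableOn_norm_sub_rpow_neg_compl_ball hp (by linarith : 0 < 2 * r)).mono_set
      (hsep_x le_rfl).subset_compl_right
  exact hpos.trans_le (ge_of_tendsto hH (eventually_of_mem (Ioc_mem_nhdsGT (by positivity)) hbound))

theorem tendsto_of_tendsto_truncatedCurvature_annulus {f : ℝ → ℝ} {r H : ℝ}
    (hp : (finrank ℝ E : ℝ) < p)
    (hf : ∀ R, r < R →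
      Tendsto (truncatedCurvature μ (ball 0 R \ ball 0 r) x p) (nhdsWithin 0 (Ioi 0)) (nhds (f R)))
    (hH : Tendsto (truncatedCurvature μ (ball 0 r) x p) (nhdsWithin 0 (Ioi 0)) (nhds H)) :
    Tendsto f atTop (nhds (-H)) := by
  set G := fun R => ∫ y in (ball 0 R)ᶜ, ‖x - y‖ ^ (-p) ∂μ
  have hG : Tendsto G atTop (nhds 0) := by
    refine tendsto_setIntegral_compl_ball_atTop 0 (R₀ := ‖x‖ + 1)
      ((integrableOn_norm_sub_rpow_neg_compl_ball (x := x) hp one_pos).mono_set ?_)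
    exact compl_subset_compl.2 (ball_subset_ball' (by rw [dist_zero_right, add_comm]))
  have hfG : ∀ R, r < R → ‖x‖ < R → f R = -H + 2 * G R := by
    intro R hrR hxR
    refine tendsto_nhds_unique (hf R hrR) ((hH.neg.add_const _).congr' ?_)
    filter_upwards [Ioo_mem_nhdsGT (sub_pos.2 hxR)] with δ ⟨hδ, hδR⟩
    refine (truncatedCurvature_diff measurableSet_ball measurableSet_ball
      (ball_subset_ball hrR.le) (ball_subset_ball' ?_) hp hδ).symm
    rw [dist_zero_right]; linarith
  have hlim : Tendsto (fun R => -H + 2 * G R) atTop (nhds (-H)) := by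
    simpa using (hG.const_mul 2).const_add (-H)
  refine hlim.congr' ?_
  filter_upwards [eventually_gt_atTop r, eventually_gt_atTop ‖x‖] with R hrR hxR
  exact (hfG R hrR hxR).symm

end Curvature

theorem annulus_curvature_limit_general (n : ℕ) (hn : 1 ≤ n) (s : ℝ) (hs : 0 < s)
    (e₁ : EuclideanSpace ℝ (Fin n)) (he₁ : e₁ = EuclideanSpace.single ⟨0, hn⟩ 1)
    (f : ℝ → ℝ) (H : ℝ)
    (hf : ∀ R : ℝ, 1 < R → Tendsto (fun δ : ℝ =>
        ∫ y in (ball e₁ δ)ᶜ,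
          (indicator (ball (0 : EuclideanSpace ℝ (Fin n)) R \ ball 0 1)ᶜ
              (fun _ => (1 : ℝ)) y
            - indicator (ball (0 : EuclideanSpace ℝ (Fin n)) R \ ball 0 1)
              (fun _ => (1 : ℝ)) y) * ‖e₁ - y‖ ^ (-((n : ℝ) + s)))
      (nhdsWithin 0 (Set.Ioi 0)) (nhds (f R)))
    (hH : Tendsto (fun δ : ℝ =>
        ∫ y in (ball e₁ δ)ᶜ,
          (indicator (ball (0 : EuclideanSpace ℝ (Fin n)) 1)ᶜ (fun _ => (1 : ℝ)) y
            - indicator (ball (0 : EuclideanSpace ℝ (Fin n)) 1) (fun _ => (1 : ℝ)) y) *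
            ‖e₁ - y‖ ^ (-((n : ℝ) + s)))
      (nhdsWithin 0 (Set.Ioi 0)) (nhds H)) :
    Tendsto f atTop (nhds (-H)) ∧ 0 < H := by
  have hp : (finrank ℝ (EuclideanSpace ℝ (Fin n)) : ℝ) < n + s := by simp [hs]
  have he₁_norm : ‖e₁‖ = 1 := by simp [he₁]
  exact ⟨tendsto_of_tendsto_truncatedCurvature_annulus hp hf hH,
    pos_of_tendsto_truncatedCurvature_ball he₁_norm one_pos hp hH⟩

/-- As `R → ∞`, `f_s(R)` tends to `-H^s_{B₁}(e₁)`, where `H^s_{B₁}(e₁) > 0` is the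
fractional mean curvature of the unit ball at `e₁` (both quantities defined as principal
values at the singular point `e₁`). -/
theorem annulus_curvature_limit (n : ℕ) (hn : 1 ≤ n) (s : ℝ) (hs : 0 < s) (hs1 : s < 1)
    (e₁ : EuclideanSpace ℝ (Fin n)) (he₁ : e₁ = EuclideanSpace.single ⟨0, hn⟩ 1)
    (f : ℝ → ℝ) (H : ℝ)
    (hf : ∀ R : ℝ, 1 < R → Tendsto (fun δ : ℝ =>
        ∫ y in (ball e₁ δ)ᶜ,
          (indicator (ball (0 : EuclideanSpace ℝ (Fin n)) R \ ball 0 1)ᶜ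
              (fun _ => (1 : ℝ)) y
            - indicator (ball (0 : EuclideanSpace ℝ (Fin n)) R \ ball 0 1)
              (fun _ => (1 : ℝ)) y) * ‖e₁ - y‖ ^ (-((n : ℝ) + s)))
      (nhdsWithin 0 (Set.Ioi 0)) (nhds (f R)))
    (hH : Tendsto (fun δ : ℝ =>
        ∫ y in (ball e₁ δ)ᶜ,
          (indicator (ball (0 : EuclideanSpace ℝ (Fin n)) 1)ᶜ (fun _ => (1 : ℝ)) y
            - indicator (ball (0 : EuclideanSpace ℝ (Fin n)) 1) (fun _ => (1 : ℝ)) y) *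
            ‖e₁ - y‖ ^ (-((n : ℝ) + s)))
      (nhdsWithin 0 (Set.Ioi 0)) (nhds H)) :
    Tendsto f atTop (nhds (-H)) ∧ 0 < H :=
  annulus_curvature_limit_general n hn s hs e₁ he₁ f H hf hH
end

section
/- Let s ∈ (0,1), let Ω ⊂ ℝ^n be open and bounded, and let E ⊂ ℝ^n be measurable. Suppose there is a sequence of points x_k with |x_k| → ∞ satisfying ∫_Ω (χ_{E^c}(y) − χ_E(y)) |x_k − y|^{-(n+s)} dy = 0 for every k. Then the Lebesgue measures satisfy |E ∩ Ω| = |E^c ∩ Ω|. -/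
/-!
Multiplying the vanishing integral by `‖x_k‖^(n+s)` turns its kernel into
`(‖x_k‖ / ‖x_k - y‖)^(n+s)`, which tends to `1` for each `y` and is bounded by `2^(n+s)` once
`‖x_k‖` is at least twice the radius of `Ω`. Dominated convergence then gives
`∫_Ω (χ_{Eᶜ} - χ_E) = |Eᶜ ∩ Ω| - |E ∩ Ω| = 0`.
-/

open Metric MeasureTheory Set Filter

open scoped Topology

theorem Real.rpow_neg_mul_rpow_eq_div_rpow {a b : ℝ} (ha : 0 ≤ a) (hb : 0 ≤ b) (c : ℝ) :
    a ^ (-c) * b ^ c = (b / a) ^ c := by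
  rw [Real.rpow_neg ha, Real.div_rpow hb ha, inv_mul_eq_div]

section NormRatio

variable {E ι : Type*} [NormedAddCommGroup E]

theorem norm_div_norm_sub_le_two {x y : E} (h : 2 * ‖y‖ ≤ ‖x‖) : ‖x‖ / ‖x - y‖ ≤ 2 :=
  div_le_of_le_mul₀ (norm_nonneg _) zero_le_two <| by
    linarith [norm_sub_norm_le x y]

theorem tendsto_norm_sub_div_norm_of_tendsto_norm_atTop {l : Filter ι} {x : ι → E}
    (hx : Tendsto (fun i => ‖x i‖) l atTop) (y : E) :
    Tendsto (fun i => ‖x i - y‖ / ‖x i‖) l (𝓝 1) := by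
  have hsmall : Tendsto (fun i => ‖y‖ / ‖x i‖) l (𝓝 0) := tendsto_const_nhds.div_atTop hx
  have hlower := (tendsto_const_nhds (x := (1 : ℝ))).sub hsmall
  have hupper := (tendsto_const_nhds (x := (1 : ℝ))).add hsmall
  rw [sub_zero] at hlower
  rw [add_zero] at hupper
  refine tendsto_of_tendsto_of_tendsto_of_le_of_le' hlower hupper ?_ ?_ <;>
    filter_upwards [hx.eventually_gt_atTop 0] with i hi
  · rw [one_sub_div hi.ne']
    gcongr
    exact norm_sub_norm_le _ _
  · rw [one_add_div hi.ne']
    gcongr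
    exact norm_sub_le _ _

theorem tendsto_norm_div_norm_sub_rpow_of_tendsto_norm_atTop {l : Filter ι} {x : ι → E}
    (hx : Tendsto (fun i => ‖x i‖) l atTop) (y : E) (c : ℝ) :
    Tendsto (fun i => (‖x i‖ / ‖x i - y‖) ^ c) l (𝓝 1) := by
  have hinv := (tendsto_norm_sub_div_norm_of_tendsto_norm_atTop hx y).inv₀ one_ne_zero
  simp only [inv_div, inv_one] at hinv
  simpa only [Real.one_rpow] using hinv.rpow_const (Or.inl one_ne_zero)

variable [MeasurableSpace E] [OpensMeasurableSpace E]

theorem tendsto_integral_mul_norm_div_norm_sub_rpow {μ : Measure E} {l : Filter ι}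
    [l.IsCountablyGenerated] {g : E → ℝ} (hg : Integrable g μ) {R c : ℝ}
    (hR : ∀ᵐ y ∂μ, ‖y‖ ≤ R) (hc : 0 ≤ c) {x : ι → E} (hx : Tendsto (fun i => ‖x i‖) l atTop) :
    Tendsto (fun i => ∫ y, g y * (‖x i‖ / ‖x i - y‖) ^ c ∂μ) l (𝓝 (∫ y, g y ∂μ)) := by
  refine tendsto_integral_filter_of_dominated_convergence (fun y => 2 ^ c * ‖g y‖) ?_ ?_
    (hg.norm.const_mul _) ?_
  · refine .of_forall fun i => hg.aestronglyMeasurable.mul ?_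
    exact ((measurable_const.div (continuous_const.sub continuous_id).norm.measurable).pow_const
      c).aestronglyMeasurable
  · filter_upwards [hx.eventually_ge_atTop (2 * R)] with i hi
    filter_upwards [hR] with y hy
    rw [norm_mul, Real.norm_of_nonneg (Real.rpow_nonneg (by positivity) c), mul_comm]
    gcongr
    exact norm_div_norm_sub_le_two (x := x i) (y := y) (by linarith)
  · refine .of_forall fun y => ?_
    simpa only [mul_one] using
      (tendsto_norm_div_norm_sub_rpow_of_tendsto_norm_atTop hx y c).const_mul (g y)

end NormRatio

theorem measure_eq_measure_compl_of_integral_indicator_compl_sub_indicator_eq_zero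
    {α : Type*} [MeasurableSpace α] {μ : Measure α} [IsFiniteMeasure μ] {E : Set α}
    (hE : MeasurableSet E)
    (h : ∫ y, (Eᶜ.indicator (fun _ => (1 : ℝ)) y - E.indicator (fun _ => (1 : ℝ)) y) ∂μ = 0) :
    μ E = μ Eᶜ := by
  rw [integral_sub ((integrable_const 1).indicator hE.compl) ((integrable_const 1).indicator hE),
    integral_indicator_const _ hE.compl, integral_indicator_const _ hE, smul_eq_mul, smul_eq_mul,
    mul_one, mul_one, sub_eq_zero] at h
  exact ((measureReal_eq_measureReal_iff (measure_ne_top _ _) (measure_ne_top _ _)).mp h).symm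

theorem volume_condition_general (n : ℕ) (s : ℝ) (hs : 0 < s)
    (Ω E : Set (EuclideanSpace ℝ (Fin n)))
    (hΩb : Bornology.IsBounded Ω) (hE : MeasurableSet E)
    (x : ℕ → EuclideanSpace ℝ (Fin n))
    (hx : Tendsto (fun k => ‖x k‖) atTop atTop)
    (hzero : ∀ k, ∫ y in Ω,
        (indicator Eᶜ (fun _ => (1 : ℝ)) y - indicator E (fun _ => (1 : ℝ)) y) *
          ‖x k - y‖ ^ (-((n : ℝ) + s)) = 0) :
    volume (E ∩ Ω) = volume (Eᶜ ∩ Ω) := by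
  set g := fun y => indicator Eᶜ (fun _ => (1 : ℝ)) y - indicator E (fun _ => (1 : ℝ)) y
  have : IsFiniteMeasure (volume.restrict Ω) :=
    isFiniteMeasure_restrict.2 hΩb.measure_lt_top.ne
  have hg : Integrable g (volume.restrict Ω) :=
    ((integrable_const 1).indicator hE.compl).sub ((integrable_const 1).indicator hE)
  obtain ⟨R, hΩR⟩ := hΩb.subset_closedBall 0
  have hbdd : ∀ᵐ y ∂volume.restrict Ω, ‖y‖ ≤ R :=
    ae_mono (Measure.restrict_mono hΩR le_rfl) <|
      ae_restrict_of_forall_mem measurableSet_closedBall fun y hy => by simpa using hy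
  have hscaled : ∀ k, ∫ y in Ω, g y * (‖x k‖ / ‖x k - y‖) ^ ((n : ℝ) + s) = 0 := fun k => by
    simp only [← Real.rpow_neg_mul_rpow_eq_div_rpow, norm_nonneg, ← mul_assoc,
      integral_mul_const]
    rw [hzero k, zero_mul]
  have hlim := tendsto_integral_mul_norm_div_norm_sub_rpow hg hbdd (c := n + s) (by positivity) hx
  simp only [hscaled] at hlim
  have hint : ∫ y in Ω, g y = 0 := (tendsto_const_nhds_iff.mp hlim).symm
  rw [← Measure.restrict_apply hE, ← Measure.restrict_apply hE.compl]
  exact measure_eq_measure_compl_of_integral_indicator_compl_sub_indicator_eq_zero hE hint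

/-- The volume condition: if the free boundary condition holds at a sequence of points going
to infinity, then `E` and `E^c` have the same volume inside the bounded domain `Ω`. -/
theorem volume_condition (n : ℕ) (s : ℝ) (hs : 0 < s) (hs1 : s < 1)
    (Ω E : Set (EuclideanSpace ℝ (Fin n))) (hΩo : IsOpen Ω)
    (hΩb : Bornology.IsBounded Ω) (hE : MeasurableSet E)
    (x : ℕ → EuclideanSpace ℝ (Fin n))
    (hx : Tendsto (fun k => ‖x k‖) atTop atTop)
    (hzero : ∀ k, ∫ y in Ω,
        (indicator Eᶜ (fun _ => (1 : ℝ)) y - indicator E (fun _ => (1 : ℝ)) y) *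
          ‖x k - y‖ ^ (-((n : ℝ) + s)) = 0) :
    volume (E ∩ Ω) = volume (Eᶜ ∩ Ω) :=
  volume_condition_general n s hs Ω E hΩb hE x hx hzero
end

section
/- Let s ∈ (0,1), let Ω ⊂ ℝ^n be open, and fix ρ > 0 with Ω ∩ B_ρ ⊂ E for a measurable set E ⊂ ℝ^n. Suppose 0 ∈ ∂Ω, and that there is a sequence x_k → 0 with x_k ∈ ℝ^n \ closure(Ω) satisfying ∫_Ω (χ_{E^c}(y) − χ_E(y)) |x_k − y|^{-(n+s)} dy = 0 for all k. Then ∫_{Ω ∩ B_ρ} |y|^{-(n+s)} dy < ∞. -/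
/-!
Near the origin, `Ω ∩ B_ρ` lies in `E`, so there the integrand of the free boundary condition
at `x_k` is `-|x_k - y|^{-(n+s)}`. The condition therefore bounds the kernel mass on `Ω ∩ B_ρ`
by its (signed) mass on `Ω \ B_ρ`, which for `|x_k| ≤ ρ/2` is at most
`2^{n+s} ∫_{B_ρᶜ} |y|^{-(n+s)} dy < ∞` since `n + s > n`. The bound is uniform in `k`, and
Fatou's lemma carries it over to the limit kernel `|y|^{-(n+s)}`.
-/

open Metric MeasureTheory Set Filter

theorem Real.rpow_neg_le_rpow_mul_rpow_neg {u v c r : ℝ} (hu : 0 < u) (hc : 0 < c) (hr : 0 ≤ r)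
    (h : u ≤ c * v) : v ^ (-r) ≤ c ^ r * u ^ (-r) := by
  have hv : u / c ≤ v := by rwa [div_le_iff₀' hc]
  calc v ^ (-r) ≤ (u / c) ^ (-r) := Real.rpow_le_rpow_of_nonpos (by positivity) hv (by linarith)
    _ = c ^ r * u ^ (-r) := by
      rw [Real.div_rpow hu.le hc.le, Real.rpow_neg hc.le, div_inv_eq_mul, mul_comm]

theorem setIntegral_inter_le_setIntegral_sdiff_of_signed_integral_eq_zero {α : Type*}
    [MeasurableSpace α] {μ : Measure α} {Ω E U : Set α} {K : α → ℝ} (hE : MeasurableSet E)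
    (hU : MeasurableSet U) (hsub : Ω ∩ U ⊆ E) (hK0 : ∀ y, 0 ≤ K y) (hK : IntegrableOn K Ω μ)
    (hzero : ∫ y in Ω,
        (indicator Eᶜ (fun _ => (1 : ℝ)) y - indicator E (fun _ => (1 : ℝ)) y) * K y ∂μ = 0) :
    ∫ y in Ω ∩ U, K y ∂μ ≤ ∫ y in Ω \ U, K y ∂μ := by
  set g : α → ℝ := fun y => indicator Eᶜ (fun _ => (1 : ℝ)) y - indicator E (fun _ => (1 : ℝ)) y
  have hg_le : ∀ y, |g y| ≤ 1 := fun y => by by_cases hy : y ∈ E <;> simp [g, hy]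
  have hgK : IntegrableOn (fun y => g y * K y) Ω μ :=
    hK.bdd_mul ((measurable_const.indicator hE.compl).sub
      (measurable_const.indicator hE)).aestronglyMeasurable (ae_of_all _ hg_le)
  have hnear : ∫ y in Ω ∩ U, g y * K y ∂μ = -∫ y in Ω ∩ U, K y ∂μ := by
    rw [← integral_neg]
    refine integral_congr_ae ?_
    filter_upwards [ae_restrict_of_ae_restrict_of_subset hsub (ae_restrict_mem hE)] with y hy
    simp [g, hy]
  have hfar : ∫ y in Ω \ U, g y * K y ∂μ ≤ ∫ y in Ω \ U, K y ∂μ := by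
    refine integral_mono (hgK.mono_set sdiff_subset) (hK.mono_set sdiff_subset) fun y => ?_
    calc g y * K y ≤ |g y| * K y := mul_le_mul_of_nonneg_right (le_abs_self _) (hK0 y)
      _ ≤ K y := mul_le_of_le_one_left (hK0 y) (hg_le y)
  linarith [integral_inter_add_sdiff hU hgK]

section Kernel

variable {V : Type*} [NormedAddCommGroup V] [NormedSpace ℝ V] [FiniteDimensional ℝ V]
  [MeasurableSpace V] [BorelSpace V] {μ : Measure V} [μ.IsAddHaarMeasure] {r ρ : ℝ}

theorem integrableOn_rpow_neg_norm_compl_ball (hr : (Module.finrank ℝ V : ℝ) < r) (hρ : 0 < ρ) :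
    IntegrableOn (fun y : V => ‖y‖ ^ (-r)) (ball 0 ρ)ᶜ μ := by
  refine ((integrable_one_add_norm hr).const_mul ((1 + ρ⁻¹) ^ r)).integrableOn.mono'
    (by fun_prop : Measurable fun y : V => ‖y‖ ^ (-r)).aestronglyMeasurable
    ((ae_restrict_iff' measurableSet_ball.compl).2 (ae_of_all _ fun y hy => ?_))
  have hy : ρ ≤ ‖y‖ := by simpa using hy
  rw [Real.norm_of_nonneg (by positivity)]
  refine Real.rpow_neg_le_rpow_mul_rpow_neg (by positivity) (by positivity)
    ((Nat.cast_nonneg _).trans hr.le) ?_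
  calc 1 + ‖y‖ ≤ ρ⁻¹ * ‖y‖ + ‖y‖ := by
        gcongr; rw [← div_eq_inv_mul, one_le_div hρ]; exact hy
    _ = (1 + ρ⁻¹) * ‖y‖ := by ring

theorem integrableOn_rpow_neg_norm_sub_compl_ball (x : V) (hr : (Module.finrank ℝ V : ℝ) < r)
    (hρ : 0 < ρ) : IntegrableOn (fun y : V => ‖x - y‖ ^ (-r)) (ball x ρ)ᶜ μ := by
  have := ((integrableOn_rpow_neg_norm_compl_ball (μ := μ) hr hρ).integrable_indicator
    measurableSet_ball.compl).comp_sub_right x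
  rw [← integrable_indicator_iff measurableSet_ball.compl]
  refine this.congr (ae_of_all _ fun y => ?_)
  classical
  simp only [indicator_apply, mem_compl_iff, mem_ball_iff_norm, sub_zero, norm_sub_rev y x]

theorem lintegral_rpow_neg_norm_sub_le_of_signed_integral_eq_zero {Ω E : Set V} {x : V}
    (hr : (Module.finrank ℝ V : ℝ) < r) (hρ : 0 < ρ) (hE : MeasurableSet E)
    (hsub : Ω ∩ ball 0 ρ ⊆ E) (hxΩ : x ∉ closure Ω) (hxρ : ‖x‖ ≤ ρ / 2)
    (hzero : ∫ y in Ω, (indicator Eᶜ (fun _ => (1 : ℝ)) y - indicator E (fun _ => (1 : ℝ)) y) *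
        ‖x - y‖ ^ (-r) ∂μ = 0) :
    ∫⁻ y in Ω ∩ ball 0 ρ, ENNReal.ofReal (‖x - y‖ ^ (-r)) ∂μ ≤
      ENNReal.ofReal (2 ^ r * ∫ y in (ball 0 ρ)ᶜ, ‖y‖ ^ (-r) ∂μ) := by
  obtain ⟨ε, hε, hεΩ⟩ := isOpen_iff.1 isClosed_closure.isOpen_compl x hxΩ
  have hΩε : Ω ⊆ (ball x ε)ᶜ := fun y hy hyε => hεΩ hyε (subset_closure hy)
  have hKfar : ∀ y ∈ (ball (0 : V) ρ)ᶜ, ‖x - y‖ ^ (-r) ≤ 2 ^ r * ‖y‖ ^ (-r) := fun y hy => by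
    have hy : ρ ≤ ‖y‖ := by simpa using hy
    refine Real.rpow_neg_le_rpow_mul_rpow_neg (by linarith) two_pos
      ((Nat.cast_nonneg _).trans hr.le) ?_
    linarith [norm_sub_norm_le y x, norm_sub_rev x y]
  have hG := (integrableOn_rpow_neg_norm_compl_ball (μ := μ) hr hρ).const_mul (2 ^ r)
  have hKfarInt : IntegrableOn (fun y => ‖x - y‖ ^ (-r)) (ball 0 ρ)ᶜ μ :=
    hG.mono' (by fun_prop : Measurable fun y : V => ‖x - y‖ ^ (-r)).aestronglyMeasurable <|
      (ae_restrict_iff' measurableSet_ball.compl).2 <| ae_of_all _ fun y hy => by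
        rw [Real.norm_of_nonneg (by positivity)]; exact hKfar y hy
  have hKΩ : IntegrableOn (fun y => ‖x - y‖ ^ (-r)) Ω μ :=
    (integrableOn_rpow_neg_norm_sub_compl_ball x hr hε).mono_set hΩε
  rw [← ofReal_integral_eq_lintegral_ofReal (hKΩ.mono_set inter_subset_left)
    (ae_of_all _ fun y => by positivity), ← integral_const_mul]
  gcongr
  calc ∫ y in Ω ∩ ball 0 ρ, ‖x - y‖ ^ (-r) ∂μ ≤ ∫ y in Ω \ ball 0 ρ, ‖x - y‖ ^ (-r) ∂μ :=
        setIntegral_inter_le_setIntegral_sdiff_of_signed_integral_eq_zero hE measurableSet_ball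
          hsub (fun y => by positivity) hKΩ hzero
    _ ≤ ∫ y in (ball 0 ρ)ᶜ, ‖x - y‖ ^ (-r) ∂μ :=
        setIntegral_mono_set hKfarInt (ae_of_all _ fun y => by positivity)
          (ae_of_all _ fun y hy => hy.2)
    _ ≤ ∫ y in (ball 0 ρ)ᶜ, 2 ^ r * ‖y‖ ^ (-r) ∂μ :=
        setIntegral_mono_on hKfarInt hG measurableSet_ball.compl hKfar

end Kernel

theorem ofReal_rpow_neg_norm_le_liminf {V ι : Type*} [SeminormedAddCommGroup V] {l : Filter ι}
    [l.NeBot] {x : ι → V} {r : ℝ} (hx : Tendsto x l (nhds 0)) (hr : 0 < r) (y : V) :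
    ENNReal.ofReal (‖y‖ ^ (-r)) ≤ liminf (fun k => ENNReal.ofReal (‖x k - y‖ ^ (-r))) l := by
  rcases eq_or_ne ‖y‖ 0 with hy | hy
  -- `Real.rpow` gives `0 ^ (-r) = 0`, so the left side vanishes at the singularity
  · simp [hy, Real.zero_rpow (neg_ne_zero.2 hr.ne')]
  refine (Tendsto.liminf_eq ?_).ge
  have hxy : Tendsto (fun k => ‖x k - y‖) l (nhds ‖y‖) := by
    simpa using (hx.sub_const y).norm
  exact ENNReal.tendsto_ofReal ((Real.continuousAt_rpow_const _ _ (Or.inl hy)).tendsto.comp hxy)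

theorem lintegral_le_of_le_liminf {α ι : Type*} [MeasurableSpace α] {μ : Measure α}
    {l : Filter ι} [l.NeBot] [l.IsCountablyGenerated] {f : α → ENNReal} {g : ι → α → ENNReal}
    {C : ENNReal} (hg : ∀ k, Measurable (g k)) (hfg : ∀ y, f y ≤ liminf (fun k => g k y) l)
    (hC : ∀ᶠ k in l, ∫⁻ y, g k y ∂μ ≤ C) : ∫⁻ y, f y ∂μ ≤ C :=
  calc ∫⁻ y, f y ∂μ ≤ ∫⁻ y, liminf (fun k => g k y) l ∂μ := lintegral_mono hfg
    _ ≤ liminf (fun k => ∫⁻ y, g k y ∂μ) l := lintegral_liminf_le hg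
    _ ≤ C := liminf_le_of_frequently_le' hC.frequently

theorem no_outside_stickiness_key_general (n : ℕ) (s ρ : ℝ)
    (hs : 0 < s) (hρ : 0 < ρ)
    (Ω E : Set (EuclideanSpace ℝ (Fin n)))
    (hsub : Ω ∩ ball 0 ρ ⊆ E) (hE : MeasurableSet E)
    (x : ℕ → EuclideanSpace ℝ (Fin n)) (hxt : Tendsto x atTop (nhds 0))
    (hxo : ∀ k, x k ∈ (closure Ω)ᶜ)
    (hzero : ∀ k, ∫ y in Ω,
        (indicator Eᶜ (fun _ => (1 : ℝ)) y - indicator E (fun _ => (1 : ℝ)) y) *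
          ‖x k - y‖ ^ (-((n : ℝ) + s)) = 0) :
    ∫⁻ y in Ω ∩ ball 0 ρ, ENNReal.ofReal (‖y‖ ^ (-((n : ℝ) + s))) < ⊤ := by
  have hr : (Module.finrank ℝ (EuclideanSpace ℝ (Fin n)) : ℝ) < n + s := by simpa using hs
  have hbound : ∀ᶠ k in atTop, ∫⁻ y in Ω ∩ ball 0 ρ, ENNReal.ofReal (‖x k - y‖ ^ (-((n : ℝ) + s)))
      ≤ ENNReal.ofReal (2 ^ ((n : ℝ) + s) *
        ∫ y in (ball (0 : EuclideanSpace ℝ (Fin n)) ρ)ᶜ, ‖y‖ ^ (-((n : ℝ) + s))) := by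
    filter_upwards [hxt.eventually (closedBall_mem_nhds 0 (half_pos hρ))] with k hk
    exact lintegral_rpow_neg_norm_sub_le_of_signed_integral_eq_zero hr hρ hE hsub (hxo k)
      (mem_closedBall_zero_iff.1 hk) (hzero k)
  exact (lintegral_le_of_le_liminf (fun k => by fun_prop)
    (ofReal_rpow_neg_norm_le_liminf hxt (by positivity)) hbound).trans_lt ENNReal.ofReal_lt_top

/-- Key step for excluding stickiness from outside: if `Ω ∩ B_ρ ⊆ E`, `0 ∈ ∂Ω`, and the free
boundary condition holds at a sequence of exterior points `x_k → 0`, then the kernel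
`|y|^{-(n+s)}` is integrable on `Ω ∩ B_ρ`. -/
theorem no_outside_stickiness_key (n : ℕ) (hn : 1 ≤ n) (s ρ : ℝ)
    (hs : 0 < s) (hs1 : s < 1) (hρ : 0 < ρ)
    (Ω E : Set (EuclideanSpace ℝ (Fin n))) (hΩ : IsOpen Ω)
    (hsub : Ω ∩ ball 0 ρ ⊆ E) (hE : MeasurableSet E)
    (h0 : (0 : EuclideanSpace ℝ (Fin n)) ∈ frontier Ω)
    (x : ℕ → EuclideanSpace ℝ (Fin n)) (hxt : Tendsto x atTop (nhds 0))
    (hxo : ∀ k, x k ∈ (closure Ω)ᶜ)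
    (hzero : ∀ k, ∫ y in Ω,
        (indicator Eᶜ (fun _ => (1 : ℝ)) y - indicator E (fun _ => (1 : ℝ)) y) *
          ‖x k - y‖ ^ (-((n : ℝ) + s)) = 0) :
    ∫⁻ y in Ω ∩ ball 0 ρ, ENNReal.ofReal (‖y‖ ^ (-((n : ℝ) + s))) < ⊤ :=
  no_outside_stickiness_key_general n s ρ hs hρ Ω E hsub hE x hxt hxo hzero
end
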